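/- arXiv:2309.04667 — 2 statements merged into one kernel-verified Lean document; each statement's English description precedes it below -/
import Mathlib

section
/- Let ε₀ ∈ (0,1), M ≥ 1, and let Y₁,...,Y_M be independent Bernoulli random variables with parameters p₁,...,p_M satisfying pᵢ ∈ [ε₀,1] for all i. Then for all r ∈ (0,1), P(∑_{m=1}^M Y_m ≥ rM) ≤ (1/ε₀)^{M(1-r)} · 2^M · ∏_{m=1}^M p_m. -/
open MeasureTheory ProbabilityTheory Finset

/-! If `∑ Yᵢ ≥ rM`, the set `S` of indices with `Yᵢ = 1` has at least `rM` elements, so a union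
bound over such `S` together with independence bounds the probability by `∑_S ∏_{i ∈ S} pᵢ`.
Since every missing factor is at least `ε₀`, each term is at most
`ε₀^{-(M - |S|)} ∏ᵢ pᵢ ≤ ε₀^{-M(1-r)} ∏ᵢ pᵢ`, and there are at most `2^M` sets `S`. -/

lemma Finset.sum_eq_card_filter_eq_one {ι : Type*} (s : Finset ι) {f : ι → ℝ}
    (hf : ∀ i, f i = 0 ∨ f i = 1) : ∑ i ∈ s, f i = #{i ∈ s | f i = 1} := by
  rw [← sum_boole]
  refine sum_congr rfl fun i _ => ?_
  rcases hf i with h | h <;> simp [h]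

lemma ProbabilityTheory.iIndepFun.measureReal_biInter_preimage {Ω ι β : Type*}
    [MeasurableSpace Ω] [MeasurableSpace β] {μ : Measure Ω} [IsFiniteMeasure μ]
    {Y : ι → Ω → β} (hY : iIndepFun Y μ) (S : Finset ι) {B : ι → Set β}
    (hB : ∀ i ∈ S, MeasurableSet (B i)) :
    μ.real (⋂ i ∈ S, Y i ⁻¹' B i) = ∏ i ∈ S, μ.real (Y i ⁻¹' B i) := by
  simp only [measureReal_def, hY.measure_inter_preimage_eq_mul S hB, ENNReal.toReal_prod]

lemma Finset.pow_card_sdiff_mul_prod_le_prod {ι R : Type*} [DecidableEq ι] [CommSemiring R]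
    [PartialOrder R] [IsOrderedRing R] {s t : Finset ι} (hst : s ⊆ t) {ε : R} {p : ι → R}
    (hε : 0 ≤ ε) (hp : ∀ i ∈ t, ε ≤ p i) : ε ^ #(t \ s) * ∏ i ∈ s, p i ≤ ∏ i ∈ t, p i := by
  rw [← prod_sdiff hst, ← prod_const]
  exact mul_le_mul_of_nonneg_right
    (prod_le_prod (fun _ _ => hε) fun i hi => hp i (sdiff_subset hi))
    (prod_nonneg fun i hi => hε.trans (hp i (hst hi)))

lemma Finset.prod_le_inv_rpow_mul_prod {ι : Type*} [Fintype ι] [DecidableEq ι] {ε : ℝ}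
    (hε0 : 0 < ε) (hε1 : ε ≤ 1) {p : ι → ℝ} (hp : ∀ i, ε ≤ p i) {S : Finset ι} {x : ℝ}
    (hx : (Fintype.card ι : ℝ) - #S ≤ x) : ∏ i ∈ S, p i ≤ (1 / ε) ^ x * ∏ i, p i := by
  have hcompl : ((#(univ \ S) : ℕ) : ℝ) ≤ x := by
    rwa [card_sdiff_of_subset (subset_univ S), card_univ, Nat.cast_sub (card_le_univ S)]
  have hprod : ε ^ #(univ \ S) * ∏ i ∈ S, p i ≤ ∏ i, p i :=
    pow_card_sdiff_mul_prod_le_prod (subset_univ S) hε0.le fun i _ => hp i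
  calc ∏ i ∈ S, p i ≤ (1 / ε) ^ #(univ \ S) * ∏ i, p i := by
        rw [one_div, inv_pow, inv_mul_eq_div, le_div_iff₀ (by positivity), mul_comm]
        exact hprod
    _ = (1 / ε) ^ ((#(univ \ S) : ℕ) : ℝ) * ∏ i, p i := by rw [Real.rpow_natCast]
    _ ≤ (1 / ε) ^ x * ∏ i, p i := by
        have : 0 ≤ ∏ i, p i := prod_nonneg fun i _ => hε0.le.trans (hp i)
        gcongr
        exact one_le_one_div hε0 hε1

lemma ProbabilityTheory.iIndepFun.measureReal_le_sum_le_sum_prod {Ω ι : Type*}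
    [MeasurableSpace Ω] {μ : Measure Ω} [IsFiniteMeasure μ] [Fintype ι] {Y : ι → Ω → ℝ}
    (hY : iIndepFun Y μ) (hvals : ∀ i ω, Y i ω = 0 ∨ Y i ω = 1) (a : ℝ) :
    μ.real {ω | a ≤ ∑ i, Y i ω} ≤
      ∑ S : Finset ι with a ≤ #S, ∏ i ∈ S, μ.real (Y i ⁻¹' {1}) := by
  classical
  have hsub : {ω | a ≤ ∑ i, Y i ω} ⊆
      ⋃ S ∈ ({S | a ≤ #S} : Finset (Finset ι)), ⋂ i ∈ S, Y i ⁻¹' {1} := by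
    intro ω hω
    rw [Set.mem_ofPred_eq, sum_eq_card_filter_eq_one _ (hvals · ω)] at hω
    exact Set.mem_iUnion₂.mpr ⟨({i | Y i ω = 1} : Finset ι), by simpa using hω,
      Set.mem_iInter₂.mpr fun i hi => by simpa using hi⟩
  calc μ.real {ω | a ≤ ∑ i, Y i ω}
      ≤ ∑ S : Finset ι with a ≤ #S, μ.real (⋂ i ∈ S, Y i ⁻¹' {1}) :=
        (measureReal_mono hsub (measure_ne_top _ _)).trans (measureReal_biUnion_finset_le _ _)
    _ = ∑ S : Finset ι with a ≤ #S, ∏ i ∈ S, μ.real (Y i ⁻¹' {1}) :=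
        sum_congr rfl fun S _ =>
          hY.measureReal_biInter_preimage S fun _ _ => measurableSet_singleton 1

theorem stmt0_general {Ω : Type*} [MeasurableSpace Ω] (P : Measure Ω) [IsProbabilityMeasure P]
    (M : ℕ) (ε₀ : ℝ) (hε : ε₀ ∈ Set.Ioo (0:ℝ) 1)
    (Y : Fin M → Ω → ℝ) (p : Fin M → ℝ)
    (hvals : ∀ i ω, Y i ω = 0 ∨ Y i ω = 1)
    (hind : iIndepFun Y P)
    (hp : ∀ i, P {ω | Y i ω = 1} = ENNReal.ofReal (p i))
    (hrange : ∀ i, p i ∈ Set.Icc ε₀ 1)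
    (r : ℝ) :
    (P {ω | r * M ≤ ∑ i, Y i ω}).toReal
      ≤ (1/ε₀) ^ ((M : ℝ) * (1 - r)) * 2 ^ M * ∏ i, p i := by
  obtain ⟨hε0, hε1⟩ := hε
  have hp0 (i : Fin M) : 0 ≤ p i := hε0.le.trans (hrange i).1
  have hpReal (i : Fin M) : P.real (Y i ⁻¹' {1}) = p i := by
    rw [measureReal_def, show Y i ⁻¹' {1} = {ω | Y i ω = 1} from rfl, hp i,
      ENNReal.toReal_ofReal (hp0 i)]
  set C := (1/ε₀) ^ ((M : ℝ) * (1 - r)) * ∏ i, p i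
  set 𝒮 : Finset (Finset (Fin M)) := {S | r * M ≤ #S}
  have hterm : ∀ S ∈ 𝒮, ∏ i ∈ S, p i ≤ C := fun S hS =>
    prod_le_inv_rpow_mul_prod hε0 hε1.le (fun i => (hrange i).1) <| by
      rw [Fintype.card_fin]
      linarith [(mem_filter.mp hS).2]
  have hC : 0 ≤ C := by
    have := prod_nonneg fun i (_ : i ∈ univ) => hp0 i
    positivity
  have hcard : (#𝒮 : ℝ) ≤ 2 ^ M := by
    exact_mod_cast (card_filter_le _ _).trans_eq (by simp)
  calc P.real {ω | r * M ≤ ∑ i, Y i ω}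
      ≤ ∑ S ∈ 𝒮, ∏ i ∈ S, p i := by
        simpa only [hpReal] using hind.measureReal_le_sum_le_sum_prod hvals (r * M)
    _ ≤ #𝒮 * C := by simpa using sum_le_sum hterm
    _ ≤ 2 ^ M * C := mul_le_mul_of_nonneg_right hcard hC
    _ = (1/ε₀) ^ ((M : ℝ) * (1 - r)) * 2 ^ M * ∏ i, p i := by ring

/-- concentration bound for independent Bernoulli variables with
parameters bounded below by `ε₀`. -/
theorem stmt0 {Ω : Type*} [MeasurableSpace Ω] (P : Measure Ω) [IsProbabilityMeasure P]
    (M : ℕ) (hM : 1 ≤ M) (ε₀ : ℝ) (hε : ε₀ ∈ Set.Ioo (0:ℝ) 1)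
    (Y : Fin M → Ω → ℝ) (p : Fin M → ℝ)
    (hmeas : ∀ i, Measurable (Y i))
    (hvals : ∀ i ω, Y i ω = 0 ∨ Y i ω = 1)
    (hind : iIndepFun Y P)
    (hp : ∀ i, P {ω | Y i ω = 1} = ENNReal.ofReal (p i))
    (hrange : ∀ i, p i ∈ Set.Icc ε₀ 1)
    (r : ℝ) (hr : r ∈ Set.Ioo (0:ℝ) 1) :
    (P {ω | r * M ≤ ∑ i, Y i ω}).toReal
      ≤ (1/ε₀) ^ ((M : ℝ) * (1 - r)) * 2 ^ M * ∏ i, p i :=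
  stmt0_general P M ε₀ hε Y p hvals hind hp hrange r
end

section
/- Let x₁,...,x_{2m} be 2m distinct points on the boundary of a square ∂B, listed in cyclic order, and fix δ = 2^{−5}. Define, for 1 ≤ j ≤ 2m−2, an index i to be j-admissible if max_{k,ℓ∈{i,...,i+j}} |x_k − x_ℓ| < δ·min{|x_{i−1} − x_i|, |x_{i+j} − x_{i+j+1}|} (indices cyclic). Then for each fixed j, any two j-admissible indices i ≠ i' satisfy that the index sets {i,...,i+j} and {i',...,i'+j} are disjoint. -/
/-- Key lemma: if `i' = i + t` with `1 ≤ t ≤ j` and both `i`, `i'` satisfy the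
admissibility inequality, we get a contradiction. -/
lemma stmt14_key (m : ℕ) (hm : 2 ≤ m)
    (x : ZMod (2 * m) → ℝ × ℝ) (hinj : Function.Injective x)
    (j : ℕ) (hj : 1 ≤ j)
    (i i' : ZMod (2 * m))
    (hi : ∀ k ℓ : ℕ, k ≤ j → ℓ ≤ j →
      dist (x (i + (k : ZMod (2 * m)))) (x (i + (ℓ : ZMod (2 * m))))
        < ((2:ℝ) ^ 5)⁻¹ * min (dist (x (i - 1)) (x i))
            (dist (x (i + (j : ZMod (2 * m)))) (x (i + (j : ZMod (2 * m)) + 1))))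
    (hi' : ∀ k ℓ : ℕ, k ≤ j → ℓ ≤ j →
      dist (x (i' + (k : ZMod (2 * m)))) (x (i' + (ℓ : ZMod (2 * m))))
        < ((2:ℝ) ^ 5)⁻¹ * min (dist (x (i' - 1)) (x i'))
            (dist (x (i' + (j : ZMod (2 * m)))) (x (i' + (j : ZMod (2 * m)) + 1))))
    (t : ℕ) (ht1 : 1 ≤ t) (htj : t ≤ j) (heq : i' = i + (t : ZMod (2 * m))) :
    False := by
  have hcast_t : ((t - 1 : ℕ) : ZMod (2 * m)) = (t : ZMod (2 * m)) - 1 := by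
    push_cast [Nat.cast_sub ht1]; ring
  have hcast_jt : ((j - t : ℕ) : ZMod (2 * m)) = (j : ZMod (2 * m)) - t := by
    push_cast [Nat.cast_sub htj]; ring
  have hcast_jt1 : ((j - t + 1 : ℕ) : ZMod (2 * m)) = (j : ZMod (2 * m)) - t + 1 := by
    push_cast [Nat.cast_sub htj]; ring
  -- admissibility of i applied to k = t-1, ℓ = t :
  have h2 := hi (t - 1) t (le_trans (Nat.sub_le t 1) htj) htj
  rw [hcast_t] at h2
  have e1 : i + ((t : ZMod (2 * m)) - 1) = i' - 1 := by rw [heq]; ring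
  have e2 : i + (t : ZMod (2 * m)) = i' := heq.symm
  rw [e1, e2] at h2
  -- admissibility of i' applied to k = j - t, ℓ = j - t + 1 :
  have h1 := hi' (j - t) (j - t + 1) (Nat.sub_le j t)
    (by omega)
  rw [hcast_jt, hcast_jt1] at h1
  have e3 : i' + ((j : ZMod (2 * m)) - t) = i + (j : ZMod (2 * m)) := by rw [heq]; ring
  have e4 : i' + ((j : ZMod (2 * m)) - t + 1) = i + (j : ZMod (2 * m)) + 1 := by
    rw [heq]; ring
  rw [e3, e4] at h1
  -- positivity of the edge length
  have hne1 : i + (j : ZMod (2 * m)) ≠ i + (j : ZMod (2 * m)) + 1 := by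
    intro h
    have h0 : ((1 : ℕ) : ZMod (2 * m)) = 0 := by
      push_cast
      linear_combination h.symm
    haveI : NeZero (2 * m) := ⟨by omega⟩
    rw [ZMod.natCast_eq_zero_iff] at h0
    exact absurd (Nat.le_of_dvd one_pos h0) (by omega)
  have hB : 0 < dist (x (i + (j : ZMod (2 * m)))) (x (i + (j : ZMod (2 * m)) + 1)) :=
    dist_pos.mpr fun h => hne1 (hinj h)
  set B := dist (x (i + (j : ZMod (2 * m)))) (x (i + (j : ZMod (2 * m)) + 1)) with hBdef
  set A := dist (x (i' - 1)) (x i') with hAdef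
  have h1' : B < ((2:ℝ) ^ 5)⁻¹ * A :=
    lt_of_lt_of_le h1 (by
      gcongr
      exact min_le_left _ _)
  have h2' : A < ((2:ℝ) ^ 5)⁻¹ * B :=
    lt_of_lt_of_le h2 (by
      gcongr
      exact min_le_right _ _)
  nlinarith [hB, h1', h2']

/-- for points `x₁, …, x_{2m}` on the boundary of a square (cyclic
indexing) and `δ = 2⁻⁵`, two distinct `j`-admissible indices have disjoint windows
`{i, …, i+j}`. -/
theorem stmt14 (m : ℕ) (hm : 1 ≤ m)
    (x : ZMod (2 * m) → ℝ × ℝ) (hinj : Function.Injective x)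
    (p q : ℝ × ℝ) (hpq1 : p.1 < q.1) (hpq2 : p.2 < q.2)
    (hbd : ∀ i, x i ∈ frontier (Set.Icc p q))
    (j : ℕ) (hj : 1 ≤ j) (hj2 : j ≤ 2 * m - 2)
    (adm : ZMod (2 * m) → Prop)
    (hadm : ∀ i, adm i ↔ ∀ k ℓ : ℕ, k ≤ j → ℓ ≤ j →
      dist (x (i + (k : ZMod (2 * m)))) (x (i + (ℓ : ZMod (2 * m))))
        < ((2:ℝ) ^ 5)⁻¹ * min (dist (x (i - 1)) (x i))
            (dist (x (i + (j : ZMod (2 * m)))) (x (i + (j : ZMod (2 * m)) + 1))))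
    (i i' : ZMod (2 * m)) (hi : adm i) (hi' : adm i') (hne : i ≠ i') :
    ∀ k ℓ : ℕ, k ≤ j → ℓ ≤ j →
      i + (k : ZMod (2 * m)) ≠ i' + (ℓ : ZMod (2 * m)) := by
  have hm2 : 2 ≤ m := by omega
  intro k ℓ hk hℓ heq
  rw [hadm] at hi hi'
  rcases lt_trichotomy ℓ k with h | h | h
  · -- i' = i + (k - ℓ)
    have heq' : i' = i + ((k - ℓ : ℕ) : ZMod (2 * m)) := by
      push_cast [Nat.cast_sub h.le]
      linear_combination -heq
    exact stmt14_key m hm2 x hinj j hj i i' hi hi' (k - ℓ) (by omega) (by omega) heq'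
  · exact hne (by subst h; linear_combination heq)
  · have heq' : i = i' + ((ℓ - k : ℕ) : ZMod (2 * m)) := by
      push_cast [Nat.cast_sub h.le]
      linear_combination heq
    exact stmt14_key m hm2 x hinj j hj i' i hi' hi (ℓ - k) (by omega) (by omega) heq'
end
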